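/- Let Ω be homogeneous of degree 0 and bounded on S^{n−1}, let 1 < q < p < ∞, and let ω ∈ A_q(ℝ^n). Then there exists a constant C > 0 (depending on n, Ω, p, q and [ω]_{A_q}) such that for all 0 < β < n(1 − q/p) and all measurable f, ( ∫_{ℝ^n} |T_2 f(x)|^p ω(x) dx )^{1/p} ≤ C · β^{n(1 − 1/p)} / ( n(1 − q/p) − β ) · ∫_{ℝ^n} |f(y)| (Mω(y))^{1/p} dy, where T_2 is the far part of T_β. -/

import Mathlib

open MeasureTheory Filter Metric Set ENNReal NNReal

noncomputable section

/-- `Ω` is homogeneous of degree `0` away from the origin. -/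
def HomogZero (n : ℕ) (Om : EuclideanSpace ℝ (Fin n) → ℝ) : Prop :=
  ∀ r : ℝ, 0 < r → ∀ x : EuclideanSpace ℝ (Fin n), x ≠ 0 → Om (r • x) = Om x

/-- `Ω` is bounded on the unit sphere. -/
def BoundedOnSphere (n : ℕ) (Om : EuclideanSpace ℝ (Fin n) → ℝ) : Prop :=
  ∃ M : ℝ, ∀ x : EuclideanSpace ℝ (Fin n), ‖x‖ = 1 → |Om x| ≤ M

/-- The sup norm `‖Ω‖_{L^∞(S^{n-1})}` of `Ω` on the unit sphere. -/
def sphereSupNorm (n : ℕ) (Om : EuclideanSpace ℝ (Fin n) → ℝ) : ℝ :=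
  sSup {t : ℝ | ∃ x : EuclideanSpace ℝ (Fin n), ‖x‖ = 1 ∧ t = |Om x|}

/-- `Ω` has mean zero on the unit sphere (w.r.t. the surface measure). -/
def MeanZeroOnSphere (n : ℕ) (Om : EuclideanSpace ℝ (Fin n) → ℝ) : Prop :=
  ∫ x : Metric.sphere (0 : EuclideanSpace ℝ (Fin n)) 1, Om x
      ∂((volume : Measure (EuclideanSpace ℝ (Fin n))).toSphere) = 0

/-- The modulus of continuity `ω_∞(δ)` of `Ω` on the unit sphere. -/
def modOmega (n : ℕ) (Om : EuclideanSpace ℝ (Fin n) → ℝ) (δ : ℝ) : ℝ :=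
  sSup {t : ℝ | ∃ x y : EuclideanSpace ℝ (Fin n),
    ‖x‖ = 1 ∧ ‖y‖ = 1 ∧ ‖x - y‖ ≤ δ ∧ t = |Om x - Om y|}

/-- The Dini condition `∫_0^1 ω_∞(δ)/δ dδ < ∞`. -/
def DiniCond (n : ℕ) (Om : EuclideanSpace ℝ (Fin n) → ℝ) : Prop :=
  IntegrableOn (fun δ : ℝ => modOmega n Om δ / δ) (Set.Ioo 0 1)

/-- The `α`-Dini condition `∫_0^1 ω_∞(δ)/δ^{1+α} dδ < ∞`. -/
def AlphaDiniCond (n : ℕ) (Om : EuclideanSpace ℝ (Fin n) → ℝ) (α : ℝ) : Prop :=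
  IntegrableOn (fun δ : ℝ => modOmega n Om δ / δ ^ (1 + α)) (Set.Ioo 0 1)

/-- The singular integral `T_β f(x) = p.v. ∫ Ω(y) |y|^{β-n} f(x-y) dy`. -/
def Tbeta (n : ℕ) (Om : EuclideanSpace ℝ (Fin n) → ℝ) (β : ℝ)
    (f : EuclideanSpace ℝ (Fin n) → ℝ) (x : EuclideanSpace ℝ (Fin n)) : ℝ :=
  limUnder (nhdsWithin (0 : ℝ) (Set.Ioi 0)) fun ε : ℝ =>
    ∫ y in {y : EuclideanSpace ℝ (Fin n) | ε < ‖y‖},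
      Om y * ‖y‖ ^ (β - n) * f (x - y)

/-- The cut-off function properties: `χ ∈ C_c^∞`, `0 ≤ χ ≤ 1`, `|χ'| ≤ 2`,
`χ = 1` on `{|s| ≤ 1}` and `χ = 0` on `{|s| > 2}`. -/
def IsCutoff (χ : ℝ → ℝ) : Prop :=
  ContDiff ℝ (⊤ : ℕ∞) χ ∧ HasCompactSupport χ ∧ (∀ s, 0 ≤ χ s ∧ χ s ≤ 1) ∧
    (∀ s, |deriv χ s| ≤ 2) ∧ (∀ s, |s| ≤ 1 → χ s = 1) ∧ (∀ s, 2 < |s| → χ s = 0)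

/-- The local part `T_1 f(x) = p.v. ∫ Ω(y)|y|^{β-n} χ_β(|y|) f(x-y) dy` of `T_β`. -/
def T1 (n : ℕ) (Om : EuclideanSpace ℝ (Fin n) → ℝ) (χ : ℝ → ℝ) (β : ℝ)
    (f : EuclideanSpace ℝ (Fin n) → ℝ) (x : EuclideanSpace ℝ (Fin n)) : ℝ :=
  limUnder (nhdsWithin (0 : ℝ) (Set.Ioi 0)) fun ε : ℝ =>
    ∫ y in {y : EuclideanSpace ℝ (Fin n) | ε < ‖y‖},
      Om y * ‖y‖ ^ (β - n) * χ (β * ‖y‖) * f (x - y)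

/-- The far part `T_2 f(x) = ∫ Ω(x-y)|x-y|^{β-n} (1-χ_β(|x-y|)) f(y) dy` of `T_β`. -/
def T2 (n : ℕ) (Om : EuclideanSpace ℝ (Fin n) → ℝ) (χ : ℝ → ℝ) (β : ℝ)
    (f : EuclideanSpace ℝ (Fin n) → ℝ) (x : EuclideanSpace ℝ (Fin n)) : ℝ :=
  ∫ y, Om (x - y) * ‖x - y‖ ^ (β - n) * (1 - χ (β * ‖x - y‖)) * f y

/-- The commutator `[b, T_β] f(x) = p.v. ∫ Ω(x-y)|x-y|^{β-n} (b(x)-b(y)) f(y) dy`. -/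
def commTbeta (n : ℕ) (Om : EuclideanSpace ℝ (Fin n) → ℝ) (β : ℝ)
    (b f : EuclideanSpace ℝ (Fin n) → ℝ) (x : EuclideanSpace ℝ (Fin n)) : ℝ :=
  limUnder (nhdsWithin (0 : ℝ) (Set.Ioi 0)) fun ε : ℝ =>
    ∫ y in {y : EuclideanSpace ℝ (Fin n) | ε < ‖x - y‖},
      Om (x - y) * ‖x - y‖ ^ (β - n) * (b x - b y) * f y

/-- The local part `[b, T_β]_1` of the commutator. -/
def commT1 (n : ℕ) (Om : EuclideanSpace ℝ (Fin n) → ℝ) (χ : ℝ → ℝ) (β : ℝ)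
    (b f : EuclideanSpace ℝ (Fin n) → ℝ) (x : EuclideanSpace ℝ (Fin n)) : ℝ :=
  limUnder (nhdsWithin (0 : ℝ) (Set.Ioi 0)) fun ε : ℝ =>
    ∫ y in {y : EuclideanSpace ℝ (Fin n) | ε < ‖x - y‖},
      Om (x - y) * ‖x - y‖ ^ (β - n) * χ (β * ‖x - y‖) * (b x - b y) * f y

/-- The far part `[b, T_β]_2` of the commutator. -/
def commT2 (n : ℕ) (Om : EuclideanSpace ℝ (Fin n) → ℝ) (χ : ℝ → ℝ) (β : ℝ)
    (b f : EuclideanSpace ℝ (Fin n) → ℝ) (x : EuclideanSpace ℝ (Fin n)) : ℝ :=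
  ∫ y, Om (x - y) * ‖x - y‖ ^ (β - n) * (1 - χ (β * ‖x - y‖)) * (b x - b y) * f y

/-- The axis-parallel cube with center `c` and side-length `h`. -/
def cube (n : ℕ) (c : EuclideanSpace ℝ (Fin n)) (h : ℝ) :
    Set (EuclideanSpace ℝ (Fin n)) :=
  {x | ∀ i, |x i - c i| ≤ h / 2}

/-- The BMO seminorm: sup over cubes of the mean oscillation. -/
def bmoNorm (n : ℕ) (b : EuclideanSpace ℝ (Fin n) → ℝ) : ℝ :=
  sSup {t : ℝ | ∃ (c : EuclideanSpace ℝ (Fin n)) (h : ℝ), 0 < h ∧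
    t = ⨍ x in cube n c h, |b x - ⨍ y in cube n c h, b y|}

/-- Membership in BMO: locally integrable with uniformly bounded mean oscillation. -/
def MemBMO (n : ℕ) (b : EuclideanSpace ℝ (Fin n) → ℝ) : Prop :=
  LocallyIntegrable b volume ∧ ∃ M : ℝ, ∀ (c : EuclideanSpace ℝ (Fin n)) (h : ℝ), 0 < h →
    (⨍ x in cube n c h, |b x - ⨍ y in cube n c h, b y|) ≤ M

/-- The Lipschitz (Hölder) seminorm of order `γ`. -/
def lipNorm (n : ℕ) (γ : ℝ) (b : EuclideanSpace ℝ (Fin n) → ℝ) : ℝ :=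
  sSup {t : ℝ | ∃ x y : EuclideanSpace ℝ (Fin n), x ≠ y ∧ t = |b x - b y| / ‖x - y‖ ^ γ}

/-- Membership in the Lipschitz space `Lip_γ`. -/
def MemLipSpace (n : ℕ) (γ : ℝ) (b : EuclideanSpace ℝ (Fin n) → ℝ) : Prop :=
  ∃ L : ℝ, ∀ x y : EuclideanSpace ℝ (Fin n), |b x - b y| ≤ L * ‖x - y‖ ^ γ

/-- The Hardy–Littlewood maximal function (over cubes), `ℝ≥0∞`-valued. -/
def maximalFn (n : ℕ) (g : EuclideanSpace ℝ (Fin n) → ℝ)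
    (x : EuclideanSpace ℝ (Fin n)) : ℝ≥0∞ :=
  ⨆ (c : EuclideanSpace ℝ (Fin n)) (h : ℝ) (_ : 0 < h) (_ : x ∈ cube n c h),
    (volume (cube n c h))⁻¹ * ∫⁻ z in cube n c h, ENNReal.ofReal |g z|

/-- The Fefferman–Stein sharp maximal function (over cubes), `ℝ≥0∞`-valued. -/
def sharpMaximal (n : ℕ) (g : EuclideanSpace ℝ (Fin n) → ℝ)
    (x : EuclideanSpace ℝ (Fin n)) : ℝ≥0∞ :=
  ⨆ (c : EuclideanSpace ℝ (Fin n)) (h : ℝ) (_ : 0 < h) (_ : x ∈ cube n c h),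
    (volume (cube n c h))⁻¹ *
      ∫⁻ z in cube n c h, ENNReal.ofReal |g z - ⨍ w in cube n c h, g w|

/-- The fractional maximal function `[g]^*_{γ,l}`, `ℝ≥0∞`-valued. -/
def fracMaximal (n : ℕ) (γ l : ℝ) (g : EuclideanSpace ℝ (Fin n) → ℝ)
    (x : EuclideanSpace ℝ (Fin n)) : ℝ≥0∞ :=
  ⨆ (c : EuclideanSpace ℝ (Fin n)) (h : ℝ) (_ : 0 < h) (_ : x ∈ cube n c h),
    ((volume (cube n c h) ^ (1 - γ * l / n))⁻¹ *
      ∫⁻ z in cube n c h, ENNReal.ofReal |g z| ^ l) ^ (1 / l)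

/-- `ω` is a Muckenhoupt `A_p` weight. -/
def IsApWeight (n : ℕ) (p : ℝ) (ω : EuclideanSpace ℝ (Fin n) → ℝ) : Prop :=
  (∀ x, 0 ≤ ω x) ∧ LocallyIntegrable ω volume ∧
    ∃ A : ℝ, ∀ (c : EuclideanSpace ℝ (Fin n)) (h : ℝ), 0 < h →
      (⨍ x in cube n c h, ω x) *
        (⨍ x in cube n c h, ω x ^ (-(1 / (p - 1)))) ^ (p - 1) ≤ A

/-- A `(p, l, 0)`-atom: supported in a ball `B`, `‖a‖_{L^l} ≤ |B|^{1/l - 1/p}`, mean zero. -/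
def IsPAtom (n : ℕ) (p l : ℝ) (a : EuclideanSpace ℝ (Fin n) → ℝ) : Prop :=
  ∃ (x₀ : EuclideanSpace ℝ (Fin n)) (r : ℝ), 0 < r ∧
    MemLp a (ENNReal.ofReal l) volume ∧
    (∀ x, x ∉ Metric.closedBall x₀ r → a x = 0) ∧
    eLpNorm a (ENNReal.ofReal l) volume ≤
      ENNReal.ofReal ((volume (Metric.closedBall x₀ r)).toReal ^ (1 / l - 1 / p)) ∧
    (∫ x, a x) = 0

/-- A `(p, l, 0)`-atom supported in a ball centered at the origin. -/
def IsCenteredPAtom (n : ℕ) (p l : ℝ) (a : EuclideanSpace ℝ (Fin n) → ℝ) : Prop :=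
  ∃ r : ℝ, 0 < r ∧
    MemLp a (ENNReal.ofReal l) volume ∧
    (∀ x, x ∉ Metric.closedBall (0 : EuclideanSpace ℝ (Fin n)) r → a x = 0) ∧
    eLpNorm a (ENNReal.ofReal l) volume ≤
      ENNReal.ofReal
        ((volume (Metric.closedBall (0 : EuclideanSpace ℝ (Fin n)) r)).toReal ^ (1 / l - 1 / p)) ∧
    (∫ x, a x) = 0

/-- An atomic decomposition of `f` into `(p,2,0)`-atoms. -/
def HpDecomp (n : ℕ) (p : ℝ) (f : EuclideanSpace ℝ (Fin n) → ℝ)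
    (lam : ℕ → ℝ) (a : ℕ → EuclideanSpace ℝ (Fin n) → ℝ) : Prop :=
  (∀ j, IsPAtom n p 2 (a j)) ∧ Summable (fun j => |lam j| ^ p) ∧
    ∀ᵐ x : EuclideanSpace ℝ (Fin n), HasSum (fun j => lam j * a j x) (f x)

/-- Membership in the Hardy space `H^p`. -/
def MemHp (n : ℕ) (p : ℝ) (f : EuclideanSpace ℝ (Fin n) → ℝ) : Prop :=
  ∃ lam a, HpDecomp n p f lam a

/-- The Hardy space quasinorm `‖f‖_{H^p}`. -/
def hpNorm (n : ℕ) (p : ℝ) (f : EuclideanSpace ℝ (Fin n) → ℝ) : ℝ :=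
  sInf {t : ℝ | ∃ lam a, HpDecomp n p f lam a ∧ t = (∑' j, |lam j| ^ p) ^ (1 / p)}

theorem cube_eq_preimage (n : ℕ) (c : EuclideanSpace ℝ (Fin n)) (h : ℝ) :
    cube n c h = ((MeasurableEquiv.toLp 2 (Fin n → ℝ)).symm) ⁻¹'
      (Set.univ.pi fun i => Icc (c i - h/2) (c i + h/2)) := by
  ext x
  rw [mem_preimage]
  simp only [Set.mem_pi, mem_univ, true_implies, mem_Icc, cube, mem_setOf_eq]
  have happ : ∀ i, ((MeasurableEquiv.toLp 2 (Fin n → ℝ)).symm) x i = x i := fun i => rfl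
  constructor
  · intro hx i
    rw [happ]
    have := abs_le.mp (hx i)
    exact ⟨by linarith [this.1], by linarith [this.2]⟩
  · intro hx i
    have := hx i
    rw [happ] at this
    rw [abs_le]
    exact ⟨by linarith [this.1], by linarith [this.2]⟩

theorem cube_measurableSet (n : ℕ) (c : EuclideanSpace ℝ (Fin n)) (h : ℝ) :
    MeasurableSet (cube n c h) := by
  rw [cube_eq_preimage]
  exact ((MeasurableEquiv.toLp 2 (Fin n → ℝ)).symm).measurable
    (MeasurableSet.univ_pi fun i => measurableSet_Icc)

theorem volume_cube (n : ℕ) (c : EuclideanSpace ℝ (Fin n)) (h : ℝ) :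
    volume (cube n c h) = ENNReal.ofReal h ^ n := by
  rw [cube_eq_preimage,
    (EuclideanSpace.volume_preserving_symm_measurableEquiv_toLp (Fin n)).measure_preimage
      (MeasurableSet.univ_pi fun i => measurableSet_Icc).nullMeasurableSet,
    volume_pi_pi]
  simp only [Real.volume_Icc]
  have : ∀ i : Fin n, ENNReal.ofReal (c i + h / 2 - (c i - h / 2)) = ENNReal.ofReal h := by
    intro i; congr 1; ring
  simp only [this]
  rw [Finset.prod_const, Finset.card_univ, Fintype.card_fin]

theorem abs_coord_le_norm (n : ℕ) (x : EuclideanSpace ℝ (Fin n)) (i : Fin n) :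
    |x i| ≤ ‖x‖ := by
  rw [EuclideanSpace.norm_eq]
  have h1 : |x i| = √(‖x i‖ ^ 2) := by
    rw [Real.norm_eq_abs, Real.sqrt_sq_eq_abs, abs_abs]
  rw [h1]
  exact Real.sqrt_le_sqrt (Finset.single_le_sum (f := fun j => ‖x j‖ ^ 2)
    (fun j _ => sq_nonneg _) (Finset.mem_univ i))

theorem exists_dyadic {s : ℝ} (hs : 1 < s) : ∃ k : ℕ, (2:ℝ)^k < s ∧ s ≤ 2^(k+1) := by
  have hex : ∃ m : ℕ, s ≤ 2^m := (pow_unbounded_of_one_lt s one_lt_two).imp fun m h => h.le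
  classical
  have hspec : s ≤ 2 ^ (Nat.find hex) := Nat.find_spec hex
  have hm0 : Nat.find hex ≠ 0 := by
    intro h
    rw [h] at hspec
    simp at hspec
    linarith
  refine ⟨Nat.find hex - 1, ?_, ?_⟩
  · by_contra hle
    push_neg at hle
    exact Nat.find_min hex (Nat.pred_lt hm0) hle
  · rwa [Nat.sub_add_cancel (Nat.one_le_iff_ne_zero.mpr hm0)]

theorem rpow_neg_self_le_three {β : ℝ} (hβ : 0 < β) : β ^ (-β) ≤ 3 := by
  rw [Real.rpow_def_of_pos hβ]
  have hlog : Real.log β⁻¹ ≤ β⁻¹ - 1 := Real.log_le_sub_one_of_pos (inv_pos.mpr hβ)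
  have h2 : Real.log β * (-β) = β * Real.log β⁻¹ := by
    rw [Real.log_inv]; ring
  have h3 : Real.log β * (-β) ≤ 1 := by
    rw [h2]
    calc β * Real.log β⁻¹ ≤ β * (β⁻¹ - 1) := by
          exact mul_le_mul_of_nonneg_left hlog hβ.le
      _ = 1 - β := by field_simp
      _ ≤ 1 := by linarith
  calc Real.exp (Real.log β * (-β)) ≤ Real.exp 1 := Real.exp_le_exp.mpr h3
    _ ≤ 3 := by
        have := Real.exp_one_lt_d9
        linarith

theorem minkowski_lintegral {α β : Type*} [MeasurableSpace α] [MeasurableSpace β]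
    (μ : Measure α) (ν : Measure β) [SigmaFinite μ] [SFinite ν]
    {H : α → β → ℝ≥0∞} (hH : Measurable (Function.uncurry H))
    {p : ℝ} (hp : 1 < p) :
    (∫⁻ x, (∫⁻ y, H x y ∂ν) ^ p ∂μ) ^ (1/p) ≤ ∫⁻ y, (∫⁻ x, H x y ^ p ∂μ) ^ (1/p) ∂ν := by
  have hp0 : 0 < p := lt_trans one_pos hp
  have hpq : p.HolderConjugate p.conjExponent := Real.HolderConjugate.conjExponent hp
  set q := p.conjExponent with hqdef
  have hq0 : 0 < q := hpq.symm.pos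
  set g : α → ℝ≥0∞ := fun x => ∫⁻ y, H x y ∂ν with hgdef
  have hg : Measurable g := by
    have : Measurable (fun z : α × β => H z.1 z.2) := hH
    exact this.lintegral_prod_right'
  set R : ℝ≥0∞ := ∫⁻ y, (∫⁻ x, H x y ^ p ∂μ) ^ (1/p) ∂ν with hRdef
  suffices h : ∫⁻ x, g x ^ p ∂μ ≤ R ^ p by
    calc (∫⁻ x, g x ^ p ∂μ) ^ (1/p) ≤ (R ^ p) ^ (1/p) :=
          ENNReal.rpow_le_rpow h (by positivity)
      _ = R := by rw [← ENNReal.rpow_mul, mul_one_div, div_self hp0.ne', ENNReal.rpow_one]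
  -- truncations
  set S : ℕ → Set α := spanningSets μ with hSdef
  set gk : ℕ → α → ℝ≥0∞ := fun k x => min (g x) (k : ℝ≥0∞) with hgkdef
  have hgk_meas : ∀ k, Measurable (gk k) := fun k => hg.min measurable_const
  have hgk_ne_top : ∀ k x, gk k x ≠ ⊤ := fun k x =>
    (lt_of_le_of_lt (min_le_right _ _) (by simp)).ne
  set A : ℕ → ℝ≥0∞ := fun k => ∫⁻ x in S k, gk k x ^ p ∂μ with hAdef
  have hA_lt_top : ∀ k, A k < ⊤ := by
    intro k
    calc A k ≤ ∫⁻ _ in S k, ((k : ℝ≥0∞)) ^ p ∂μ := by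
          refine lintegral_mono fun x => ?_
          exact ENNReal.rpow_le_rpow (min_le_right _ _) hp0.le
      _ = ((k : ℝ≥0∞)) ^ p * μ (S k) := by rw [setLIntegral_const]
      _ < ⊤ := ENNReal.mul_lt_top
          (ENNReal.rpow_lt_top_of_nonneg hp0.le (by simp)) (measure_spanningSets_lt_top μ k)
  -- key estimate for the truncations
  have hkey : ∀ k, A k ≤ A k ^ (1/q) * R := by
    intro k
    have h1 : A k ≤ ∫⁻ x in S k, gk k x ^ (p-1) * g x ∂μ := by
      refine lintegral_mono fun x => ?_
      have heq : gk k x ^ (p-1) * gk k x = gk k x ^ p := by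
        nth_rewrite 2 [← ENNReal.rpow_one (gk k x)]
        rw [← ENNReal.rpow_add_of_nonneg _ _ (by linarith) zero_le_one]
        norm_num
      rw [← heq]
      exact mul_le_mul_right (min_le_left _ _) _
    have h2 : ∫⁻ x in S k, gk k x ^ (p-1) * g x ∂μ
        = ∫⁻ y, ∫⁻ x in S k, gk k x ^ (p-1) * H x y ∂μ ∂ν := by
      have heq : ∀ x, gk k x ^ (p-1) * g x = ∫⁻ y, gk k x ^ (p-1) * H x y ∂ν := by
        intro x
        rw [hgdef]
        exact (lintegral_const_mul' _ _
          (ENNReal.rpow_lt_top_of_nonneg (by linarith) (hgk_ne_top k x)).ne).symm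
      simp_rw [heq]
      refine lintegral_lintegral_swap ?_
      exact ((((hgk_meas k).pow_const _).comp measurable_fst).mul hH).aemeasurable
    have h3 : ∀ y, ∫⁻ x in S k, gk k x ^ (p-1) * H x y ∂μ
        ≤ A k ^ (1/q) * (∫⁻ x, H x y ^ p ∂μ) ^ (1/p) := by
      intro y
      have hHy : Measurable fun x => H x y :=
        hH.comp (measurable_id.prodMk measurable_const)
      have hAeq : ∫⁻ x in S k, (gk k x ^ (p-1)) ^ q ∂μ = A k := by
        refine lintegral_congr fun x => ?_
        rw [← ENNReal.rpow_mul, hpq.sub_one_mul_conj]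
      calc ∫⁻ x in S k, gk k x ^ (p-1) * H x y ∂μ
          ≤ (∫⁻ x in S k, (gk k x ^ (p-1)) ^ q ∂μ) ^ (1/q) *
            (∫⁻ x in S k, H x y ^ p ∂μ) ^ (1/p) := by
            have := ENNReal.lintegral_mul_le_Lp_mul_Lq (μ.restrict (S k)) hpq.symm
              ((hgk_meas k).pow_const (p-1)).aemeasurable hHy.aemeasurable
            simpa [Pi.mul_apply] using this
        _ ≤ A k ^ (1/q) * (∫⁻ x, H x y ^ p ∂μ) ^ (1/p) := by
            refine mul_le_mul' (le_of_eq (by rw [hAeq])) ?_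
            exact ENNReal.rpow_le_rpow
              (lintegral_mono' Measure.restrict_le_self le_rfl) (by positivity)
    calc A k ≤ ∫⁻ y, ∫⁻ x in S k, gk k x ^ (p-1) * H x y ∂μ ∂ν := h2 ▸ h1
      _ ≤ ∫⁻ y, A k ^ (1/q) * (∫⁻ x, H x y ^ p ∂μ) ^ (1/p) ∂ν := lintegral_mono fun y => h3 y
      _ = A k ^ (1/q) * R := lintegral_const_mul' _ _
          (ENNReal.rpow_lt_top_of_nonneg (by positivity) (hA_lt_top k).ne).ne
  have hAk_le : ∀ k, A k ≤ R ^ p := by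
    intro k
    rcases eq_or_ne (A k) 0 with h0 | h0
    · simp [h0]
    have hfin := (hA_lt_top k).ne
    have hc : A k ^ (1/p) ≤ R := by
      have hmul : A k ^ (1/p) * A k ^ (1/q) = A k := by
        have hsum : 1/p + 1/q = 1 := by rw [one_div, one_div]; exact hpq.inv_add_inv_eq_one
        rw [← ENNReal.rpow_add _ _ h0 hfin, hsum, ENNReal.rpow_one]
      have h1q0 : A k ^ (1/q) ≠ 0 := by
        simp only [ne_eq, ENNReal.rpow_eq_zero_iff, not_or]
        constructor
        · rintro ⟨h, -⟩; exact h0 h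
        · rintro ⟨h, -⟩; exact hfin h
      have h1qt : A k ^ (1/q) ≠ ⊤ := (ENNReal.rpow_lt_top_of_nonneg (by positivity) hfin).ne
      rw [← ENNReal.mul_le_mul_iff_left h1q0 h1qt, hmul]
      calc A k ≤ A k ^ (1/q) * R := hkey k
        _ = R * A k ^ (1/q) := mul_comm _ _
    calc A k = (A k ^ (1/p)) ^ p := by
          rw [← ENNReal.rpow_mul, one_div_mul_cancel hp0.ne', ENNReal.rpow_one]
      _ ≤ R ^ p := ENNReal.rpow_le_rpow hc hp0.le
  -- monotone convergence
  set Fk : ℕ → α → ℝ≥0∞ := fun k x => (S k).indicator (fun x => gk k x ^ p) x with hFkdef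
  have hmeasF : ∀ k, Measurable (Fk k) := fun k =>
    ((hgk_meas k).pow_const p).indicator (measurableSet_spanningSets μ k)
  have hmonoF : Monotone Fk := by
    intro k l hkl x
    simp only [hFkdef]
    by_cases hx : x ∈ S k
    · rw [indicator_of_mem hx, indicator_of_mem (monotone_spanningSets μ hkl hx)]
      refine ENNReal.rpow_le_rpow (min_le_min le_rfl ?_) hp0.le
      exact_mod_cast Nat.cast_le.2 hkl
    · rw [indicator_of_notMem hx]; exact zero_le
  have hsup : ∀ x, g x ^ p ≤ ⨆ k, Fk k x := by
    intro x
    obtain ⟨m, hm⟩ : ∃ m, x ∈ S m := by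
      have : x ∈ ⋃ k, S k := by rw [hSdef, iUnion_spanningSets]; trivial
      exact mem_iUnion.mp this
    rcases eq_or_ne (g x) ⊤ with htop | hfin
    · have hsup_top : ∀ k : ℕ, (k : ℝ≥0∞) ≤ ⨆ j, Fk j x := by
        intro k
        set j := max m k with hjdef
        have hxj : x ∈ S j := monotone_spanningSets μ (le_max_left m k) hm
        have hFj : Fk j x = ((j : ℕ) : ℝ≥0∞) ^ p := by
          rw [hFkdef]
          simp only
          rw [indicator_of_mem hxj, hgkdef]
          simp [htop]
        rcases Nat.eq_zero_or_pos j with hj0 | hjpos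
        · have : k = 0 := Nat.le_zero.mp (hj0 ▸ le_max_right m k)
          simp [this]
        · have h1j : (1 : ℝ≥0∞) ≤ (j : ℝ≥0∞) := by exact_mod_cast hjpos
          calc (k : ℝ≥0∞) ≤ (j : ℝ≥0∞) := by exact_mod_cast le_max_right m k
            _ = (j : ℝ≥0∞) ^ (1:ℝ) := (ENNReal.rpow_one _).symm
            _ ≤ ((j : ℕ) : ℝ≥0∞) ^ p := ENNReal.rpow_le_rpow_of_exponent_le h1j hp.le
            _ = Fk j x := hFj.symm
            _ ≤ ⨆ j, Fk j x := le_iSup (fun j => Fk j x) j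
      rw [htop, ENNReal.top_rpow_of_pos hp0]
      rw [← ENNReal.iSup_natCast]
      exact iSup_le hsup_top
    · obtain ⟨k0, hk0⟩ := ENNReal.exists_nat_gt hfin
      set j := max m k0 with hjdef
      have hxj : x ∈ S j := monotone_spanningSets μ (le_max_left m k0) hm
      have hmin : gk j x = g x := by
        rw [hgkdef]
        simp only
        refine min_eq_left (le_trans hk0.le ?_)
        exact_mod_cast le_max_right m k0
      calc g x ^ p = Fk j x := by
            rw [hFkdef]; simp only; rw [indicator_of_mem hxj, hmin]
        _ ≤ ⨆ j, Fk j x := le_iSup (fun j => Fk j x) j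
  calc ∫⁻ x, g x ^ p ∂μ ≤ ∫⁻ x, ⨆ k, Fk k x ∂μ := lintegral_mono hsup
    _ = ⨆ k, ∫⁻ x, Fk k x ∂μ := lintegral_iSup hmeasF hmonoF
    _ = ⨆ k, A k := by
        refine iSup_congr fun k => ?_
        rw [hFkdef, hAdef]
        simp only
        rw [lintegral_indicator (measurableSet_spanningSets μ k)]
    _ ≤ R ^ p := iSup_le hAk_le

set_option maxHeartbeats 2000000 in
/-- Lemma: weighted estimate for the far part `T_2` with an `A_q` weight. -/
theorem far_part_weighted_estimate
    (n : ℕ) (hn : 0 < n) (Om : EuclideanSpace ℝ (Fin n) → ℝ)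
    (hhom : HomogZero n Om) (hbd : BoundedOnSphere n Om)
    (χ : ℝ → ℝ) (hχ : IsCutoff χ) (p q : ℝ) (hq : 1 < q) (hqp : q < p)
    (ω : EuclideanSpace ℝ (Fin n) → ℝ) (hω : IsApWeight n q ω) :
    ∃ C : ℝ, 0 < C ∧ ∀ (β : ℝ) (f : EuclideanSpace ℝ (Fin n) → ℝ),
      0 < β → β < n * (1 - q / p) → Measurable f →
      (∫⁻ x, ENNReal.ofReal |T2 n Om χ β f x| ^ p * ENNReal.ofReal (ω x)) ^ (1 / p) ≤
        ENNReal.ofReal (C * (β ^ (n * (1 - 1 / p)) / (n * (1 - q / p) - β))) *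
          ∫⁻ y, ENNReal.ofReal |f y| * (maximalFn n ω y) ^ (1 / p) := by
  classical
  have hp1 : 1 < p := hq.trans hqp
  have hp0 : 0 < p := one_pos.trans hp1
  have hnR : (0:ℝ) < n := Nat.cast_pos.mpr hn
  obtain ⟨M0, hM0⟩ := hbd
  set M : ℝ := max M0 1 with hMdef
  have hM1 : (1:ℝ) ≤ M := le_max_right _ _
  have hMpos : (0:ℝ) < M := lt_of_lt_of_le one_pos hM1
  have hOmbd : ∀ z : EuclideanSpace ℝ (Fin n), z ≠ 0 → |Om z| ≤ M := by
    intro z hz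
    have hz' : 0 < ‖z‖ := norm_pos_iff.mpr hz
    set u := ‖z‖⁻¹ • z with hu
    have hun : ‖u‖ = 1 := norm_smul_inv_norm hz
    have hu0 : u ≠ 0 := by
      intro h; rw [h] at hun; simp at hun
    have hOmz : Om (‖z‖ • u) = Om u := hhom ‖z‖ hz' u hu0
    rw [hu, smul_smul, mul_inv_cancel₀ hz'.ne', one_smul] at hOmz
    rw [hOmz]
    exact le_trans (hM0 u hun) (le_max_left _ _)
  set r0 : ℝ := (2:ℝ) ^ (-((n:ℝ) * (q - 1))) with hr0def
  have hr0lt : r0 < 1 := Real.rpow_lt_one_of_one_lt_of_neg one_lt_two (by nlinarith)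
  have hr0pos : 0 < r0 := Real.rpow_pos_of_pos two_pos _
  set C1 : ℝ := (4:ℝ)^n / (1 - r0) with hC1def
  have hC1pos : 0 < C1 := div_pos (by positivity) (by linarith)
  set C3 : ℝ := M * (3 * C1 ^ ((1:ℝ)/p)) with hC3def
  have hC3pos : 0 < C3 := by positivity
  refine ⟨n * C3, by positivity, ?_⟩
  intro β f hβ hβn hf
  have hqp0 : 0 < q / p := div_pos (by linarith) hp0
  have hβn' : β < n := by nlinarith
  have hβnp : (β - n) * p ≤ 0 := mul_nonpos_of_nonpos_of_nonneg (by linarith) hp0.le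
  have hθ : (β - (n:ℝ)) * p + n < -((n:ℝ) * (q - 1)) := by
    have h1 : β * p < (n:ℝ) * (1 - q/p) * p := mul_lt_mul_of_pos_right hβn hp0
    have h2 : (n:ℝ) * (1 - q/p) * p = n * p - n * q := by field_simp
    nlinarith
  obtain ⟨hω_nonneg, hω_loc, -⟩ := hω
  set ω₀ := hω_loc.aestronglyMeasurable.mk ω with hω₀def
  have hω₀meas : Measurable ω₀ := hω_loc.aestronglyMeasurable.stronglyMeasurable_mk.measurable
  have hω₀ae : ω =ᵐ[volume] ω₀ := hω_loc.aestronglyMeasurable.ae_eq_mk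
  set W : EuclideanSpace ℝ (Fin n) → ℝ≥0∞ := fun x => ENNReal.ofReal |ω₀ x| with hWdef
  have hWmeas : Measurable W := hω₀meas.abs.ennreal_ofReal
  have hWfin : ∀ x, W x ≠ ⊤ := fun x => ENNReal.ofReal_ne_top
  have hWae : (fun x => ENNReal.ofReal (ω x)) =ᵐ[volume] W := by
    filter_upwards [hω₀ae] with x hx
    simp only [hWdef]
    rw [← hx, abs_of_nonneg (hω_nonneg x)]
  have hWae' : ∀ (s : Set (EuclideanSpace ℝ (Fin n))),
      ∫⁻ z in s, W z = ∫⁻ z in s, ENNReal.ofReal |ω z| := by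
    intro s
    refine lintegral_congr_ae (ae_restrict_of_ae ?_)
    filter_upwards [hω₀ae] with x hx
    simp only [hWdef, hx]
  set F : EuclideanSpace ℝ (Fin n) → ℝ≥0∞ := fun y => ENNReal.ofReal |f y| with hFdef
  have hFmeas : Measurable F := hf.abs.ennreal_ofReal
  have hFfin : ∀ y, F y ≠ ⊤ := fun y => ENNReal.ofReal_ne_top
  set K : EuclideanSpace ℝ (Fin n) → ℝ≥0∞ :=
    fun z => if 1/β < ‖z‖ then ENNReal.ofReal (‖z‖ ^ (β - (n:ℝ))) else 0 with hKdef
  have hKmeas : Measurable K := by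
    refine Measurable.ite (measurableSet_lt measurable_const measurable_norm) ?_ measurable_const
    exact (measurable_norm.pow measurable_const).ennreal_ofReal
  -- pointwise bound on T2
  have hptwise : ∀ x, ENNReal.ofReal |T2 n Om χ β f x| ≤
      ∫⁻ y, ENNReal.ofReal M * (K (x - y) * F y) := by
    intro x
    obtain ⟨-, -, hχ01, -, hχ1, -⟩ := hχ
    set G : EuclideanSpace ℝ (Fin n) → ℝ :=
      fun y => Om (x - y) * ‖x - y‖ ^ (β - (n:ℝ)) * (1 - χ (β * ‖x - y‖)) * f y with hGdef
    have hT2 : T2 n Om χ β f x = ∫ y, G y := rfl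
    have hGbd : ∀ y, ENNReal.ofReal |G y| ≤ ENNReal.ofReal M * (K (x - y) * F y) := by
      intro y
      by_cases hy : 1/β < ‖x - y‖
      · have hz0 : (0:ℝ) < ‖x - y‖ := lt_trans (by positivity) hy
        have hzne : x - y ≠ 0 := by rw [← norm_pos_iff]; exact hz0
        have hK : K (x - y) = ENNReal.ofReal (‖x - y‖ ^ (β - (n:ℝ))) := if_pos hy
        have habs : |G y| ≤ M * (‖x - y‖ ^ (β - (n:ℝ)) * |f y|) := by
          simp only [hGdef]
          rw [abs_mul, abs_mul, abs_mul]
          have h1 : |Om (x - y)| ≤ M := hOmbd _ hzne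
          have h2 : |‖x - y‖ ^ (β - (n:ℝ))| = ‖x - y‖ ^ (β - (n:ℝ)) :=
            abs_of_nonneg (Real.rpow_nonneg (norm_nonneg _) _)
          have h3 : |1 - χ (β * ‖x - y‖)| ≤ 1 := by
            have h30 := (hχ01 (β * ‖x - y‖)).1
            have h31 := (hχ01 (β * ‖x - y‖)).2
            rw [abs_le]
            exact ⟨by linarith, by linarith⟩
          rw [h2]
          have hnn : (0:ℝ) ≤ ‖x - y‖ ^ (β - (n:ℝ)) := Real.rpow_nonneg (norm_nonneg _) _
          calc |Om (x - y)| * ‖x - y‖ ^ (β - (n:ℝ)) * |1 - χ (β * ‖x - y‖)| * |f y|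
              ≤ M * ‖x - y‖ ^ (β - (n:ℝ)) * 1 * |f y| := by
                refine mul_le_mul_of_nonneg_right ?_ (abs_nonneg _)
                refine mul_le_mul ?_ h3 (abs_nonneg _) (by positivity)
                exact mul_le_mul_of_nonneg_right h1 hnn
            _ = M * (‖x - y‖ ^ (β - (n:ℝ)) * |f y|) := by ring
        calc ENNReal.ofReal |G y| ≤ ENNReal.ofReal (M * (‖x - y‖ ^ (β - (n:ℝ)) * |f y|)) :=
              ENNReal.ofReal_le_ofReal habs
          _ = ENNReal.ofReal M * (K (x - y) * F y) := by
              rw [hK, hFdef, ENNReal.ofReal_mul hMpos.le,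
                ENNReal.ofReal_mul (Real.rpow_nonneg (norm_nonneg _) _)]
      · have hχeq : χ (β * ‖x - y‖) = 1 := by
          apply hχ1
          rw [abs_of_nonneg (by positivity)]
          have hle : ‖x - y‖ ≤ 1/β := le_of_not_gt hy
          calc β * ‖x - y‖ ≤ β * (1/β) := by
                exact mul_le_mul_of_nonneg_left hle hβ.le
            _ = 1 := by field_simp
        have hG0 : G y = 0 := by simp only [hGdef]; rw [hχeq]; ring
        rw [hG0]
        simp
    by_cases hint : Integrable G volume
    · rw [hT2]
      calc ENNReal.ofReal |∫ y, G y| ≤ ∫⁻ y, ENNReal.ofReal |G y| := by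
            have h1 := MeasureTheory.norm_integral_le_lintegral_norm (μ := volume) G
            simp only [Real.norm_eq_abs] at h1
            refine le_trans (ENNReal.ofReal_le_ofReal h1) ?_
            exact ENNReal.ofReal_toReal_le
        _ ≤ _ := lintegral_mono hGbd
    · rw [hT2, integral_undef hint]
      simp
  set g : EuclideanSpace ℝ (Fin n) → ℝ≥0∞ := fun x => ∫⁻ y, K (x - y) * F y with hgdef
  set cM := ENNReal.ofReal M with hcMdef
  have hcMne : cM ≠ ⊤ := ENNReal.ofReal_ne_top
  have hI1 : ∫⁻ x, ENNReal.ofReal |T2 n Om χ β f x| ^ p * ENNReal.ofReal (ω x)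
      ≤ cM ^ p * ∫⁻ x, g x ^ p * W x := by
    have h0 : ∫⁻ x, ENNReal.ofReal |T2 n Om χ β f x| ^ p * ENNReal.ofReal (ω x)
        = ∫⁻ x, ENNReal.ofReal |T2 n Om χ β f x| ^ p * W x := by
      refine lintegral_congr_ae ?_
      filter_upwards [hWae] with x hx
      rw [hx]
    rw [h0, ← lintegral_const_mul' _ _ (ENNReal.rpow_lt_top_of_nonneg hp0.le hcMne).ne]
    refine lintegral_mono fun x => ?_
    have hb : ENNReal.ofReal |T2 n Om χ β f x| ≤ cM * g x := by
      refine le_trans (hptwise x) ?_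
      rw [hgdef]
      exact le_of_eq (lintegral_const_mul' cM _ hcMne)
    calc ENNReal.ofReal |T2 n Om χ β f x| ^ p * W x ≤ (cM * g x) ^ p * W x :=
          mul_le_mul_left (ENNReal.rpow_le_rpow hb hp0.le) _
      _ = cM ^ p * (g x ^ p * W x) := by
          rw [ENNReal.mul_rpow_of_nonneg _ _ hp0.le, mul_assoc]
  set H : EuclideanSpace ℝ (Fin n) → EuclideanSpace ℝ (Fin n) → ℝ≥0∞ :=
    fun x y => K (x - y) * F y * W x ^ ((1:ℝ)/p) with hHdef
  have hHmeas : Measurable (Function.uncurry H) := by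
    refine Measurable.mul (Measurable.mul ?_ ?_) ?_
    · exact hKmeas.comp (measurable_fst.sub measurable_snd)
    · exact hFmeas.comp measurable_snd
    · exact (hWmeas.comp measurable_fst).pow measurable_const
  have hWpow_ne : ∀ x, W x ^ ((1:ℝ)/p) ≠ ⊤ := fun x =>
    (ENNReal.rpow_lt_top_of_nonneg (by positivity) (hWfin x)).ne
  have hGH : ∀ x, g x ^ p * W x = (∫⁻ y, H x y) ^ p := by
    intro x
    have h1 : ∫⁻ y, H x y = g x * W x ^ ((1:ℝ)/p) := by
      simp only [hHdef, hgdef]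
      exact lintegral_mul_const' _ _ (hWpow_ne x)
    rw [h1, ENNReal.mul_rpow_of_nonneg _ _ hp0.le, ← ENNReal.rpow_mul,
      one_div_mul_cancel hp0.ne', ENNReal.rpow_one]
  have hmink : (∫⁻ x, g x ^ p * W x) ^ ((1:ℝ)/p) ≤ ∫⁻ y, (∫⁻ x, H x y ^ p) ^ ((1:ℝ)/p) := by
    have heq : ∫⁻ x, g x ^ p * W x = ∫⁻ x, (∫⁻ y, H x y) ^ p := lintegral_congr hGH
    rw [heq]
    exact minkowski_lintegral volume volume hHmeas hp1
  -- maximal function lower bound on cubes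
  have hmax : ∀ (y : EuclideanSpace ℝ (Fin n)) (h : ℝ), 0 < h →
      ∫⁻ z in cube n y h, W z ≤ ENNReal.ofReal h ^ n * maximalFn n ω y := by
    intro y h hh
    have hvol : volume (cube n y h) = ENNReal.ofReal h ^ n := volume_cube n y h
    have hne0 : (ENNReal.ofReal h ^ n) ≠ 0 := by
      apply pow_ne_zero
      simp [ENNReal.ofReal_eq_zero]
      linarith
    have hnetop : (ENNReal.ofReal h ^ n) ≠ ⊤ := by
      exact ENNReal.pow_ne_top ENNReal.ofReal_ne_top
    have hmem : y ∈ cube n y h := by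
      intro i; simp only [sub_self, abs_zero]; positivity
    have hle : (volume (cube n y h))⁻¹ * ∫⁻ z in cube n y h, ENNReal.ofReal |ω z|
        ≤ maximalFn n ω y := by
      simp only [maximalFn]
      exact le_iSup_of_le y (le_iSup_of_le h (le_iSup_of_le hh (le_iSup_of_le hmem le_rfl)))
    calc ∫⁻ z in cube n y h, W z = ∫⁻ z in cube n y h, ENNReal.ofReal |ω z| := hWae' _
      _ = ENNReal.ofReal h ^ n *
          ((ENNReal.ofReal h ^ n)⁻¹ * ∫⁻ z in cube n y h, ENNReal.ofReal |ω z|) := by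
          rw [← mul_assoc, ENNReal.mul_inv_cancel hne0 hnetop, one_mul]
      _ ≤ ENNReal.ofReal h ^ n * maximalFn n ω y := by
          rw [hvol] at hle
          exact mul_le_mul_right hle _
  set e : ℝ := ((n:ℝ) - β) * p - n with hedef
  -- kernel estimate
  have hker : ∀ y, ∫⁻ x, K (x - y) ^ p * W x ≤
      ENNReal.ofReal (C1 * β ^ e) * maximalFn n ω y := by
    intro y
    set T : Set (EuclideanSpace ℝ (Fin n)) := {x | 1/β < ‖x - y‖} with hTdef
    have hnmeas : Measurable fun x : EuclideanSpace ℝ (Fin n) => ‖x - y‖ :=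
      (measurable_id.sub measurable_const).norm
    have hTmeas : MeasurableSet T := measurableSet_lt measurable_const hnmeas
    set Ak : ℕ → Set (EuclideanSpace ℝ (Fin n)) := fun k =>
      {x | 2^k * (1/β) < ‖x - y‖ ∧ ‖x - y‖ ≤ 2^(k+1) * (1/β)} with hAkdef
    have hAkmeas : ∀ k, MeasurableSet (Ak k) := fun k =>
      (measurableSet_lt measurable_const hnmeas).inter
        (measurableSet_le hnmeas measurable_const)
    have hTsub : T ⊆ ⋃ k, Ak k := by
      intro x hx
      have hx' : 1/β < ‖x - y‖ := hx
      have hs : 1 < β * ‖x - y‖ := by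
        rw [div_lt_iff₀ hβ] at hx'
        linarith [mul_comm β ‖x - y‖]
      obtain ⟨k, hk1, hk2⟩ := exists_dyadic hs
      refine mem_iUnion.mpr ⟨k, ⟨?_, ?_⟩⟩
      · rw [mul_one_div, div_lt_iff₀ hβ]
        have := mul_comm β ‖x - y‖
        linarith
      · rw [mul_one_div, le_div_iff₀ hβ]
        have := mul_comm β ‖x - y‖
        linarith
    have hIeq : ∫⁻ x, K (x - y) ^ p * W x
        = ∫⁻ x in T, ENNReal.ofReal (‖x - y‖ ^ (β - (n:ℝ))) ^ p * W x := by
      rw [← lintegral_indicator hTmeas]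
      refine lintegral_congr fun x => ?_
      by_cases hx : (1:ℝ)/β < ‖x - y‖
      · rw [indicator_of_mem (show x ∈ T from hx)]
        have hKx : K (x - y) = ENNReal.ofReal (‖x - y‖ ^ (β - (n:ℝ))) := if_pos hx
        rw [hKx]
      · rw [indicator_of_notMem (show x ∉ T from hx)]
        have hKx : K (x - y) = 0 := if_neg hx
        rw [hKx, ENNReal.zero_rpow_of_pos hp0, zero_mul]
    have hann : ∀ k, ∫⁻ x in Ak k, ENNReal.ofReal (‖x - y‖ ^ (β - (n:ℝ))) ^ p * W x
        ≤ ENNReal.ofReal ((2^k * (1/β)) ^ ((β - (n:ℝ)) * p)) * ∫⁻ x in Ak k, W x := by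
      intro k
      rw [← lintegral_const_mul' _ _ ENNReal.ofReal_ne_top]
      refine setLIntegral_mono' (hAkmeas k) fun x hx => ?_
      obtain ⟨hx1, hx2⟩ := hx
      have hbase : (0:ℝ) < 2^k * (1/β) := by positivity
      have h1 : ENNReal.ofReal (‖x - y‖ ^ (β - (n:ℝ))) ^ p
          = ENNReal.ofReal (‖x - y‖ ^ ((β - (n:ℝ)) * p)) := by
        rw [ENNReal.ofReal_rpow_of_nonneg (Real.rpow_nonneg (norm_nonneg _) _) hp0.le,
          ← Real.rpow_mul (norm_nonneg _)]
      have h2 : ‖x - y‖ ^ ((β - (n:ℝ)) * p) ≤ (2^k * (1/β)) ^ ((β - (n:ℝ)) * p) :=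
        Real.rpow_le_rpow_of_nonpos hbase hx1.le hβnp
      refine mul_le_mul_left ?_ _
      rw [h1]
      exact ENNReal.ofReal_le_ofReal h2
    have hcube : ∀ k, ∫⁻ x in Ak k, W x ≤
        ENNReal.ofReal (2^(k+2) * (1/β)) ^ n * maximalFn n ω y := by
      intro k
      have hsub : Ak k ⊆ cube n y (2^(k+2) * (1/β)) := by
        intro x hx i
        obtain ⟨hx1, hx2⟩ := hx
        have h1 : |x i - y i| ≤ ‖x - y‖ := by
          have := abs_coord_le_norm n (x - y) i
          simpa using this
        calc |x i - y i| ≤ ‖x - y‖ := h1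
          _ ≤ 2^(k+1) * (1/β) := hx2
          _ = 2^(k+2) * (1/β) / 2 := by ring
      calc ∫⁻ x in Ak k, W x ≤ ∫⁻ x in cube n y (2^(k+2) * (1/β)), W x :=
            lintegral_mono_set hsub
        _ ≤ _ := hmax y _ (by positivity)
    set a : ℕ → ℝ := fun k =>
      (2^k * (1/β)) ^ ((β - (n:ℝ)) * p) * (2^(k+2) * (1/β))^n with hadef
    have hsum_le : ∫⁻ x, K (x - y) ^ p * W x
        ≤ (∑' k, ENNReal.ofReal (a k)) * maximalFn n ω y := by
      rw [hIeq]
      calc ∫⁻ x in T, ENNReal.ofReal (‖x - y‖ ^ (β - (n:ℝ))) ^ p * W x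
          ≤ ∫⁻ x in ⋃ k, Ak k, ENNReal.ofReal (‖x - y‖ ^ (β - (n:ℝ))) ^ p * W x :=
            lintegral_mono_set hTsub
        _ ≤ ∑' k, ∫⁻ x in Ak k, ENNReal.ofReal (‖x - y‖ ^ (β - (n:ℝ))) ^ p * W x :=
            lintegral_iUnion_le _ _
        _ ≤ ∑' k, ENNReal.ofReal (a k) * maximalFn n ω y := by
            refine ENNReal.tsum_le_tsum fun k => ?_
            calc ∫⁻ x in Ak k, ENNReal.ofReal (‖x - y‖ ^ (β - (n:ℝ))) ^ p * W x
                ≤ ENNReal.ofReal ((2^k * (1/β)) ^ ((β - (n:ℝ)) * p)) * ∫⁻ x in Ak k, W x :=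
                  hann k
              _ ≤ ENNReal.ofReal ((2^k * (1/β)) ^ ((β - (n:ℝ)) * p)) *
                  (ENNReal.ofReal (2^(k+2) * (1/β)) ^ n * maximalFn n ω y) :=
                  mul_le_mul_right (hcube k) _
              _ = ENNReal.ofReal (a k) * maximalFn n ω y := by
                  have hsplit : ENNReal.ofReal (a k) =
                      ENNReal.ofReal ((2^k * (1/β)) ^ ((β - (n:ℝ)) * p)) *
                      ENNReal.ofReal (2^(k+2) * (1/β)) ^ n := by
                    simp only [hadef]
                    rw [ENNReal.ofReal_mul (by positivity), ENNReal.ofReal_pow (by positivity)]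
                  rw [hsplit, mul_assoc]
        _ = (∑' k, ENNReal.ofReal (a k)) * maximalFn n ω y := ENNReal.tsum_mul_right
    set r : ℝ := (2:ℝ) ^ ((β - (n:ℝ)) * p + n) with hrdef
    have hrpos : 0 < r := Real.rpow_pos_of_pos two_pos _
    have hrr0 : r ≤ r0 := Real.rpow_le_rpow_of_exponent_le one_le_two hθ.le
    have hr1 : r < 1 := lt_of_le_of_lt hrr0 hr0lt
    set b : ℝ := β ^ e * 4^n with hbdef
    have hbnonneg : 0 ≤ b := by
      rw [hbdef]; positivity
    have hak : ∀ k, a k = b * r ^ k := by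
      intro k
      induction k with
      | zero =>
        rw [hadef]
        simp only [pow_zero, one_mul, mul_one]
        have h1 : ((1:ℝ)/β) ^ ((β - (n:ℝ)) * p) = β ^ (((n:ℝ) - β) * p) := by
          rw [one_div, Real.inv_rpow hβ.le, ← Real.rpow_neg hβ.le]
          congr 1; ring
        have h2 : ((2:ℝ)^(0+2) * (1/β))^n = 4^n * β ^ (-(n:ℝ)) := by
          rw [mul_pow, one_div, inv_pow, ← Real.rpow_natCast β n, ← Real.rpow_neg hβ.le]
          norm_num
        rw [h1, h2, hbdef, hedef,
          show (((n:ℝ) - β) * p - (n:ℝ)) = (((n:ℝ) - β) * p) + (-(n:ℝ)) by ring,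
          Real.rpow_add hβ]
        ring
      | succ k ih =>
        have e1 : (2:ℝ)^(k+1) * (1/β) = 2 * (2^k * (1/β)) := by ring
        have e2 : (2:ℝ)^(k+1+2) * (1/β) = 2 * (2^(k+2) * (1/β)) := by ring
        have hr2 : (2:ℝ) ^ ((β - (n:ℝ)) * p) * 2^n = r := by
          rw [hrdef, Real.rpow_add two_pos, Real.rpow_natCast]
        have hstep : a (k+1) = ((2:ℝ) ^ ((β - (n:ℝ)) * p) * 2^n) * a k := by
          rw [hadef]
          simp only
          rw [e1, e2, Real.mul_rpow (by norm_num) (by positivity), mul_pow]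
          ring
        rw [hstep, hr2, ih]
        ring
    have htsum : (∑' k, ENNReal.ofReal (a k)) = ENNReal.ofReal (b * (1 - r)⁻¹) := by
      have hsummable : Summable fun k : ℕ => b * r ^ k :=
        (summable_geometric_of_lt_one hrpos.le hr1).mul_left b
      calc (∑' k, ENNReal.ofReal (a k)) = ∑' k, ENNReal.ofReal (b * r ^ k) := by
            refine tsum_congr fun k => ?_
            rw [hak k]
        _ = ENNReal.ofReal (∑' k, b * r ^ k) :=
            (ENNReal.ofReal_tsum_of_nonneg (fun k => by positivity) hsummable).symm
        _ = ENNReal.ofReal (b * (1 - r)⁻¹) := by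
            rw [_root_.tsum_mul_left, tsum_geometric_of_lt_one hrpos.le hr1]
    have hfinal : ENNReal.ofReal (b * (1 - r)⁻¹) ≤ ENNReal.ofReal (C1 * β ^ e) := by
      apply ENNReal.ofReal_le_ofReal
      have hb1 : (1 - r)⁻¹ ≤ (1 - r0)⁻¹ := by
        apply inv_anti₀ (by linarith) (by linarith)
      calc b * (1 - r)⁻¹ ≤ b * (1 - r0)⁻¹ := mul_le_mul_of_nonneg_left hb1 hbnonneg
        _ = C1 * β ^ e := by rw [hbdef, hC1def, div_eq_mul_inv]; ring
    calc ∫⁻ x, K (x - y) ^ p * W x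
        ≤ (∑' k, ENNReal.ofReal (a k)) * maximalFn n ω y := hsum_le
      _ ≤ ENNReal.ofReal (C1 * β ^ e) * maximalFn n ω y := by
          rw [htsum]
          exact mul_le_mul_left hfinal _
  -- combine with Minkowski
  have hstep5 : ∀ y, (∫⁻ x, H x y ^ p) ^ ((1:ℝ)/p) ≤
      F y * ENNReal.ofReal (C1 * β ^ e) ^ ((1:ℝ)/p) * maximalFn n ω y ^ ((1:ℝ)/p) := by
    intro y
    have hHp : ∀ x, H x y ^ p = F y ^ p * (K (x - y) ^ p * W x) := by
      intro x
      simp only [hHdef]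
      rw [ENNReal.mul_rpow_of_nonneg _ _ hp0.le, ENNReal.mul_rpow_of_nonneg _ _ hp0.le,
        ← ENNReal.rpow_mul, one_div_mul_cancel hp0.ne', ENNReal.rpow_one]
      ring
    have h1 : ∫⁻ x, H x y ^ p = F y ^ p * ∫⁻ x, K (x - y) ^ p * W x := by
      calc ∫⁻ x, H x y ^ p = ∫⁻ x, F y ^ p * (K (x - y) ^ p * W x) := lintegral_congr hHp
        _ = _ := lintegral_const_mul' _ _ (ENNReal.rpow_lt_top_of_nonneg hp0.le (hFfin y)).ne
    rw [h1, ENNReal.mul_rpow_of_nonneg _ _ (by positivity), ← ENNReal.rpow_mul,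
      mul_one_div, div_self hp0.ne', ENNReal.rpow_one]
    calc F y * (∫⁻ x, K (x - y) ^ p * W x) ^ ((1:ℝ)/p)
        ≤ F y * (ENNReal.ofReal (C1 * β ^ e) * maximalFn n ω y) ^ ((1:ℝ)/p) :=
          mul_le_mul_right (ENNReal.rpow_le_rpow (hker y) (by positivity)) _
      _ = F y * ENNReal.ofReal (C1 * β ^ e) ^ ((1:ℝ)/p) * maximalFn n ω y ^ ((1:ℝ)/p) := by
          rw [ENNReal.mul_rpow_of_nonneg _ _ (by positivity), mul_assoc]
  set c2 := ENNReal.ofReal (C1 * β ^ e) ^ ((1:ℝ)/p) with hc2def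
  have hc2ne : c2 ≠ ⊤ :=
    (ENNReal.rpow_lt_top_of_nonneg (by positivity) ENNReal.ofReal_ne_top).ne
  have hRHS : (∫⁻ y, (∫⁻ x, H x y ^ p) ^ ((1:ℝ)/p))
      ≤ c2 * ∫⁻ y, F y * maximalFn n ω y ^ ((1:ℝ)/p) := by
    rw [← lintegral_const_mul' _ _ hc2ne]
    refine lintegral_mono fun y => ?_
    calc (∫⁻ x, H x y ^ p) ^ ((1:ℝ)/p)
        ≤ F y * c2 * maximalFn n ω y ^ ((1:ℝ)/p) := hstep5 y
      _ = c2 * (F y * maximalFn n ω y ^ ((1:ℝ)/p)) := by ring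
  have htotal : (∫⁻ x, ENNReal.ofReal |T2 n Om χ β f x| ^ p * ENNReal.ofReal (ω x)) ^ ((1:ℝ)/p)
      ≤ cM * c2 * ∫⁻ y, F y * maximalFn n ω y ^ ((1:ℝ)/p) := by
    calc (∫⁻ x, ENNReal.ofReal |T2 n Om χ β f x| ^ p * ENNReal.ofReal (ω x)) ^ ((1:ℝ)/p)
        ≤ (cM ^ p * ∫⁻ x, g x ^ p * W x) ^ ((1:ℝ)/p) :=
          ENNReal.rpow_le_rpow hI1 (by positivity)
      _ = cM * (∫⁻ x, g x ^ p * W x) ^ ((1:ℝ)/p) := by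
          rw [ENNReal.mul_rpow_of_nonneg _ _ (by positivity), ← ENNReal.rpow_mul,
            mul_one_div, div_self hp0.ne', ENNReal.rpow_one]
      _ ≤ cM * ∫⁻ y, (∫⁻ x, H x y ^ p) ^ ((1:ℝ)/p) := mul_le_mul_right hmink _
      _ ≤ cM * (c2 * ∫⁻ y, F y * maximalFn n ω y ^ ((1:ℝ)/p)) := mul_le_mul_right hRHS _
      _ = cM * c2 * ∫⁻ y, F y * maximalFn n ω y ^ ((1:ℝ)/p) := by rw [mul_assoc]
  -- numeric bound on the constant
  have hden : 0 < (n:ℝ) * (1 - q/p) - β := by linarith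
  have hdenle : (n:ℝ) * (1 - q/p) - β ≤ n := by nlinarith
  have hnum : M * (C1 * β ^ e) ^ ((1:ℝ)/p) ≤
      (n * C3) * (β ^ ((n:ℝ) * (1 - 1/p)) / ((n:ℝ) * (1 - q/p) - β)) := by
    set av : ℝ := (n:ℝ) * (1 - 1/p) with havdef
    have hCβ : (C1 * β ^ e) ^ ((1:ℝ)/p) = C1 ^ ((1:ℝ)/p) * β ^ (e * (1/p)) := by
      rw [Real.mul_rpow hC1pos.le (Real.rpow_pos_of_pos hβ _).le, ← Real.rpow_mul hβ.le]
    have hea : e * (1/p) = av - β := by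
      rw [hedef, havdef]
      field_simp
      ring
    have hsplit : β ^ (av - β) = β ^ av * β ^ (-β) := by
      rw [← Real.rpow_add hβ]
      ring_nf
    have h3 : β ^ (-β) ≤ 3 := rpow_neg_self_le_three hβ
    have hL : M * (C1 * β ^ e) ^ ((1:ℝ)/p) ≤ C3 * β ^ av := by
      rw [hCβ, hea, hsplit]
      have hnn1 : (0:ℝ) ≤ C1 ^ ((1:ℝ)/p) := by positivity
      have hnn2 : (0:ℝ) ≤ β ^ av := (Real.rpow_pos_of_pos hβ _).le
      calc M * (C1 ^ ((1:ℝ)/p) * (β ^ av * β ^ (-β)))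
          ≤ M * (C1 ^ ((1:ℝ)/p) * (β ^ av * 3)) := by
            refine mul_le_mul_of_nonneg_left ?_ hMpos.le
            refine mul_le_mul_of_nonneg_left ?_ hnn1
            exact mul_le_mul_of_nonneg_left h3 hnn2
        _ = C3 * β ^ av := by rw [hC3def]; ring
    refine le_trans hL ?_
    have hrw : (n:ℝ) * C3 * (β ^ av / ((n:ℝ) * (1 - q/p) - β))
        = ((n:ℝ) * C3 * β ^ av) / ((n:ℝ) * (1 - q/p) - β) := by ring
    rw [hrw, le_div_iff₀ hden]
    have hβa : (0:ℝ) ≤ β ^ av := (Real.rpow_pos_of_pos hβ _).le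
    nlinarith [mul_nonneg (mul_nonneg hC3pos.le hβa) (sub_nonneg.mpr hdenle)]
  calc (∫⁻ x, ENNReal.ofReal |T2 n Om χ β f x| ^ p * ENNReal.ofReal (ω x)) ^ (1/p)
      ≤ cM * c2 * ∫⁻ y, F y * maximalFn n ω y ^ ((1:ℝ)/p) := htotal
    _ ≤ ENNReal.ofReal ((n * C3) * (β ^ ((n:ℝ) * (1 - 1/p)) / ((n:ℝ) * (1 - q/p) - β))) *
        ∫⁻ y, F y * maximalFn n ω y ^ ((1:ℝ)/p) := by
        refine mul_le_mul_left ?_ _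
        have hcc : cM * c2 = ENNReal.ofReal (M * (C1 * β ^ e) ^ ((1:ℝ)/p)) := by
          rw [hc2def, hcMdef, ENNReal.ofReal_rpow_of_nonneg (by positivity) (by positivity),
            ← ENNReal.ofReal_mul hMpos.le]
        rw [hcc]
        exact ENNReal.ofReal_le_ofReal hnum
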